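/- arXiv:1509.01043 — 2 statements merged into one kernel-verified Lean document; each statement's English description precedes it below -/
import Mathlib

section
/- Let m ≥ 2, let G₁, …, Gₘ be finite groups, and let G be a subgroup of the direct product ∏_{k=1}^m Gₖ. Assume that for every 1 ≤ i ≤ m the projection πᵢ : G → Gᵢ is surjective, and that for all 1 ≤ i < j ≤ m the projection π_{ij} : G → ∏_{k ≠ i,j} Gₖ is injective. Then for every 1 ≤ i ≤ m and every prime number p dividing |Gᵢ|, the square p² divides the index [∏_{k=1}^m Gₖ : G]. In particular, if some Gᵢ is nontrivial, there exists a prime p with p² dividing [∏_{k=1}^m Gₖ : G]. -/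
section Aux
variable {m : ℕ} {G : Fin m → Type*} [∀ k, Group (G k)] [∀ k, Fintype (G k)]
  (H : Subgroup (∀ k, G k))

lemma aux_pair (i j : Fin m) (hij : i < j)
    (hinj : Function.Injective
        (fun g : H => fun k : {k : Fin m // k ≠ i ∧ k ≠ j} => (g : ∀ k, G k) k.1)) :
    Nat.card (G i) * Nat.card (G j) ∣ H.index := by
  classical
  set c : Fin m → ℕ := fun k => Nat.card (G k) with hc
  -- the projection as a monoid hom
  let f : H →* (∀ k : {k : Fin m // k ≠ i ∧ k ≠ j}, G k) :=
    { toFun := fun g => fun k => (g : ∀ k, G k) k.1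
      map_one' := rfl
      map_mul' := fun _ _ => rfl }
  have h1 : Nat.card H ∣ Nat.card (∀ k : {k : Fin m // k ≠ i ∧ k ≠ j}, G k) :=
    Subgroup.card_dvd_of_injective f hinj
  have hsub : Nat.card (∀ k : {k : Fin m // k ≠ i ∧ k ≠ j}, G k)
      = ∏ k ∈ (Finset.univ.erase j).erase i, c k := by
    rw [Nat.card_pi]
    exact (Finset.prod_subtype _ (by simp [and_comm]) c).symm
  have htot : Nat.card (∀ k, G k) = c i * (c j * ∏ k ∈ (Finset.univ.erase j).erase i, c k) := by
    rw [Nat.card_pi, ← Finset.mul_prod_erase Finset.univ c (Finset.mem_univ j),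
      ← Finset.mul_prod_erase (Finset.univ.erase j) c
        (Finset.mem_erase.mpr ⟨Fin.ne_of_lt hij, Finset.mem_univ i⟩)]
    ring
  obtain ⟨t, ht⟩ := h1
  rw [hsub] at ht
  have hcardH : 0 < Nat.card H := Nat.card_pos
  have key : H.index * Nat.card H = Nat.card (∀ k, G k) := H.index_mul_card
  rw [htot, ht] at key
  refine ⟨t, Nat.eq_of_mul_eq_mul_right hcardH ?_⟩
  rw [key]; ring

lemma aux_surj (i : Fin m)
    (hs : Function.Surjective (fun g : H => (g : ∀ k, G k) i)) :
    H.index ∣ ∏ k ∈ Finset.univ.erase i, Nat.card (G k) := by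
  classical
  have h1 : Nat.card (G i) ∣ Nat.card H :=
    Subgroup.card_dvd_of_surjective ((Pi.evalMonoidHom G i).comp H.subtype) hs
  obtain ⟨s, hsct⟩ := h1
  have htot : Nat.card (∀ k, G k)
      = Nat.card (G i) * ∏ k ∈ Finset.univ.erase i, Nat.card (G k) := by
    rw [Nat.card_pi, ← Finset.mul_prod_erase Finset.univ _ (Finset.mem_univ i)]
  have key : H.index * Nat.card H = Nat.card (∀ k, G k) := H.index_mul_card
  rw [htot, hsct] at key
  have hci : 0 < Nat.card (G i) := Nat.card_pos
  refine ⟨s, Nat.eq_of_mul_eq_mul_left hci ?_⟩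
  calc Nat.card (G i) * ∏ k ∈ Finset.univ.erase i, Nat.card (G k)
      = H.index * (Nat.card (G i) * s) := key.symm
    _ = Nat.card (G i) * (H.index * s) := by ring

end Aux

/-- Let `m ≥ 2`, let `G₁, …, Gₘ` be finite groups, and let `G` be a subgroup of the
direct product `∏_{k=1}^m Gₖ`. Assume that every coordinate projection `πᵢ : G → Gᵢ`
is surjective and every projection `π_{ij}` omitting two coordinates is injective.
Then for every `i` and every prime `p` dividing `|Gᵢ|`, `p²` divides the index
`[∏_{k=1}^m Gₖ : G]`; in particular, if some `Gᵢ` is nontrivial, there exists a prime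
`p` with `p²` dividing the index. -/
theorem stmt_2 (m : ℕ) (hm : 2 ≤ m) (G : Fin m → Type*) [∀ k, Group (G k)]
    [∀ k, Fintype (G k)] (H : Subgroup (∀ k, G k))
    (hsurj : ∀ i : Fin m, Function.Surjective (fun g : H => (g : ∀ k, G k) i))
    (hinj : ∀ i j : Fin m, i < j →
      Function.Injective
        (fun g : H => fun k : {k : Fin m // k ≠ i ∧ k ≠ j} => (g : ∀ k, G k) k.1)) :
    (∀ i : Fin m, ∀ p : ℕ, p.Prime → p ∣ Nat.card (G i) → p ^ 2 ∣ H.index) ∧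
    ((∃ i : Fin m, Nontrivial (G i)) → ∃ p : ℕ, p.Prime ∧ p ^ 2 ∣ H.index) := by
  classical
  have pairdvd : ∀ i j : Fin m, i ≠ j → Nat.card (G i) * Nat.card (G j) ∣ H.index := by
    intro i j hij
    rcases lt_or_gt_of_ne hij with h | h
    · exact aux_pair H i j h (hinj i j h)
    · rw [mul_comm]
      exact aux_pair H j i h (hinj j i h)
  have main : ∀ i : Fin m, ∀ p : ℕ, p.Prime → p ∣ Nat.card (G i) → p ^ 2 ∣ H.index := by
    intro i p hp hpi
    have : Nontrivial (Fin m) := Fin.nontrivial_iff_two_le.mpr hm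
    obtain ⟨j, hji⟩ := exists_ne i
    have hidx : p ∣ H.index :=
      dvd_trans hpi (dvd_trans (dvd_mul_right _ _) (pairdvd i j (Ne.symm hji)))
    have hprod : p ∣ ∏ k ∈ Finset.univ.erase i, Nat.card (G k) :=
      dvd_trans hidx (aux_surj H i (hsurj i))
    obtain ⟨j', hj'mem, hpj'⟩ := hp.prime.exists_mem_finset_dvd hprod
    have hj'i : j' ≠ i := (Finset.mem_erase.mp hj'mem).1
    have : p * p ∣ Nat.card (G i) * Nat.card (G j') := mul_dvd_mul hpi hpj'
    rw [pow_two]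
    exact dvd_trans this (pairdvd i j' (Ne.symm hj'i))
  refine ⟨main, ?_⟩
  rintro ⟨i, hnt⟩
  have h1 : Nat.card (G i) ≠ 1 := (Finite.one_lt_card (α := G i)).ne'
  obtain ⟨p, hp, hpd⟩ := Nat.exists_prime_and_dvd h1
  exact ⟨p, hp, main i p hp hpd⟩
end

section
/- Let p be a prime number, let m ≥ 2, let G₁, …, Gₘ be nontrivial finite groups, and let G be a subgroup of the direct product ∏_{k=1}^m Gₖ. Assume that for all 1 ≤ i < j ≤ m the projection π_{ij} : G → ∏_{k ≠ i,j} Gₖ is injective, and that the index [∏_{k=1}^m Gₖ : G] equals p². Then every Gₖ is cyclic of order p; moreover G is a normal subgroup of ∏_{k=1}^m Gₖ of order p^{m−2}, and the quotient group (∏_{k=1}^m Gₖ)/G is isomorphic to (ℤ/pℤ) × (ℤ/pℤ). -/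
theorem add_iso_aux (p : ℕ) (hp : p.Prime) (A : Type*) [AddCommGroup A] [Finite A]
    [Module (ZMod p) A] (hcard : Nat.card A = p ^ 2) :
    Nonempty (A ≃+ ZMod p × ZMod p) := by
  haveI : Fact p.Prime := ⟨hp⟩
  haveI : NeZero p := ⟨hp.ne_zero⟩
  haveI : Module.Finite (ZMod p) A := Module.finite_iff_finite.2 inferInstance
  haveI : Fintype A := Fintype.ofFinite A
  have hr : Module.finrank (ZMod p) A = 2 := by
    have h1 := Module.card_eq_pow_finrank (K := ZMod p) (V := A)
    rw [ZMod.card] at h1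
    have hc : Nat.card A = p ^ Module.finrank (ZMod p) A :=
      Nat.card_eq_fintype_card.trans h1
    exact Nat.pow_right_injective hp.two_le (hc.symm.trans hcard)
  have e : A ≃ₗ[ZMod p] (Fin 2 → ZMod p) :=
    (Module.finBasisOfFinrankEq (ZMod p) A hr).equivFun
  exact ⟨e.toAddEquiv.trans { finTwoArrowEquiv (ZMod p) with map_add' := fun a b => rfl }⟩

theorem elem_ab_iso_aux (p : ℕ) (hp : p.Prime) (Q : Type*) [Group Q] [Finite Q]
    (hcomm : ∀ a b : Q, a * b = b * a)
    (hcard : Nat.card Q = p ^ 2) (hexp : ∀ x : Q, x ^ p = 1) :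
    Nonempty (Q ≃* Multiplicative (ZMod p × ZMod p)) := by
  letI : CommGroup Q := { (inferInstance : Group Q) with mul_comm := hcomm }
  letI : Module (ZMod p) (Additive Q) := AddCommGroup.zmodModule (fun x => hexp x)
  obtain ⟨e⟩ := add_iso_aux p hp (Additive Q) hcard
  exact ⟨(MulEquiv.multiplicativeAdditive Q).symm.trans (AddEquiv.toMultiplicative e)⟩

theorem pair_eq_p_aux (p : ℕ) (hp : p.Prime) {a b : ℕ} (hab : a * b ∣ p ^ 2)
    (ha : 2 ≤ a) (hb : 2 ≤ b) : a = p := by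
  obtain ⟨t, ht, rfl⟩ := (Nat.dvd_prime_pow hp).1 ((dvd_mul_right a b).trans hab)
  obtain ⟨s, hs, rfl⟩ := (Nat.dvd_prime_pow hp).1 ((dvd_mul_left b _).trans hab)
  rw [← pow_add] at hab
  have hts : t + s ≤ 2 := (Nat.pow_dvd_pow_iff_le_right hp.one_lt).1 hab
  have ht1 : 1 ≤ t := by
    rcases Nat.eq_zero_or_pos t with rfl | h
    · norm_num at ha
    · exact h
  have hs1 : 1 ≤ s := by
    rcases Nat.eq_zero_or_pos s with rfl | h
    · norm_num at hb
    · exact h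
  have : t = 1 := by omega
  rw [this, pow_one]

/-- Let `p` be a prime, `m ≥ 2`, let `G₁, …, Gₘ` be nontrivial finite groups, and let
`G` be a subgroup of `∏_{k=1}^m Gₖ` such that every projection omitting two coordinates
is injective, and the index `[∏ Gₖ : G]` equals `p²`. Then every `Gₖ` is cyclic of
order `p`; moreover `G` is a normal subgroup of order `p^{m-2}`, and the quotient group
is isomorphic to `(ℤ/pℤ) × (ℤ/pℤ)`. -/
theorem stmt_3 (p : ℕ) (hp : p.Prime) (m : ℕ) (hm : 2 ≤ m) (G : Fin m → Type*)
    [∀ k, Group (G k)] [∀ k, Fintype (G k)] [∀ k, Nontrivial (G k)]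
    (H : Subgroup (∀ k, G k))
    (hinj : ∀ i j : Fin m, i < j →
      Function.Injective
        (fun g : H => fun k : {k : Fin m // k ≠ i ∧ k ≠ j} => (g : ∀ k, G k) k.1))
    (hidx : H.index = p ^ 2) :
    (∀ k, IsCyclic (G k) ∧ Nat.card (G k) = p) ∧
    Nat.card H = p ^ (m - 2) ∧
    ∃ hn : H.Normal,
      Nonempty (letI := hn;
        ((∀ k, G k) ⧸ H) ≃* Multiplicative (ZMod p × ZMod p)) := by
  haveI : Fact p.Prime := ⟨hp⟩
  classical
  set c : Fin m → ℕ := fun k => Nat.card (G k) with hc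
  have key : ∀ i j : Fin m, i < j → c i * c j ∣ p ^ 2 := by
    intro i j hij
    let φ : H →* (∀ k : {k : Fin m // k ≠ i ∧ k ≠ j}, G k.1) :=
      Pi.monoidHom fun k => (Pi.evalMonoidHom G k.1).comp H.subtype
    have hφ : Function.Injective φ := hinj i j hij
    have hdvd : Nat.card H ∣ Nat.card (∀ k : {k : Fin m // k ≠ i ∧ k ≠ j}, G k.1) :=
      Subgroup.card_dvd_of_injective φ hφ
    have hpi : Nat.card (∀ k : {k : Fin m // k ≠ i ∧ k ≠ j}, G k.1)
        = ∏ k ∈ (Finset.univ.erase i).erase j, c k := by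
      rw [Nat.card_pi]
      exact (Finset.prod_subtype _ (by intro x; simp [Finset.mem_erase, and_comm]) c).symm
    obtain ⟨D, hD⟩ := hdvd
    have hHpos : 0 < Nat.card H := Nat.card_pos
    have e1 : Nat.card H * p ^ 2 = Nat.card (∀ k, G k) := by
      rw [← hidx]; exact Subgroup.card_mul_index H
    have e2 : Nat.card (∀ k, G k)
        = c i * (c j * ∏ k ∈ (Finset.univ.erase i).erase j, c k) := by
      rw [Nat.card_pi,
        ← Finset.mul_prod_erase Finset.univ c (Finset.mem_univ i),
        ← Finset.mul_prod_erase _ c (Finset.mem_erase.2 ⟨hij.ne', Finset.mem_univ j⟩)]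
    have e3 : Nat.card H * p ^ 2 = Nat.card H * (c i * c j * D) := by
      rw [e1, e2, ← hpi, hD]; ring
    exact ⟨D, Nat.eq_of_mul_eq_mul_left hHpos e3⟩
  have h2 : ∀ k : Fin m, 2 ≤ c k := fun k => Finite.one_lt_card
  have hck : ∀ k, c k = p := by
    intro k
    have h01 : (⟨0, by omega⟩ : Fin m) < ⟨1, by omega⟩ := by simp [Fin.lt_def]
    rcases eq_or_ne k ⟨0, by omega⟩ with rfl | hne
    · exact pair_eq_p_aux p hp (key _ _ h01) (h2 _) (h2 _)
    · have h0k : (⟨0, by omega⟩ : Fin m) < k := by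
        simp only [Fin.lt_def]
        exact Nat.pos_of_ne_zero (fun h => hne (Fin.ext h))
      have := key _ _ h0k
      exact pair_eq_p_aux p hp (by rwa [mul_comm] at this) (h2 _) (h2 _)
  have hcyc : ∀ k, IsCyclic (G k) := fun k => isCyclic_of_prime_card (hck k)
  have htot : Nat.card (∀ k, G k) = p ^ m := by
    rw [Nat.card_pi]
    simp only [← hc, hck]
    simp
  have hcardH : Nat.card H = p ^ (m - 2) := by
    have hsplit : p ^ m = p ^ (m - 2) * p ^ 2 := by
      rw [← pow_add]; congr 1; omega
    have e1 : Nat.card H * p ^ 2 = p ^ (m - 2) * p ^ 2 := by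
      rw [← hidx, Subgroup.card_mul_index H, htot, hsplit, hidx]
    exact Nat.eq_of_mul_eq_mul_right (Nat.pow_pos hp.pos) e1
  have hcommk : ∀ (k : Fin m) (a b : G k), a * b = b * a := by
    intro k a b
    letI : CommGroup (G k) := @IsCyclic.commGroup _ _ (hcyc k)
    exact mul_comm a b
  have hPicomm : ∀ a b : (∀ k, G k), a * b = b * a := fun a b =>
    funext fun k => hcommk k (a k) (b k)
  have hn : H.Normal := by
    constructor
    intro n hnH g
    have : g * n * g⁻¹ = n := by rw [hPicomm g n, mul_inv_cancel_right]
    rwa [this]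
  refine ⟨fun k => ⟨hcyc k, hck k⟩, hcardH, hn, ?_⟩
  letI := hn
  have hQcomm : ∀ a b : ((∀ k, G k) ⧸ H), a * b = b * a := by
    intro a b
    induction a using QuotientGroup.induction_on with
    | H a =>
      induction b using QuotientGroup.induction_on with
      | H b =>
        rw [← QuotientGroup.mk_mul, ← QuotientGroup.mk_mul, hPicomm a b]
  have hQcard : Nat.card ((∀ k, G k) ⧸ H) = p ^ 2 := by
    rw [← hidx]; rfl
  have hQexp : ∀ x : ((∀ k, G k) ⧸ H), x ^ p = 1 := by
    intro x
    induction x using QuotientGroup.induction_on with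
    | H g =>
      rw [← QuotientGroup.mk_pow]
      have : g ^ p = 1 := by
        funext k
        have : (g k) ^ p = 1 := by
          rw [← hck k]; exact pow_card_eq_one'
        simpa using this
      rw [this, QuotientGroup.mk_one]
  exact elem_ab_iso_aux p hp _ hQcomm hQcard hQexp
end
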